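/- arXiv:2112.06181 — 3 statements merged into one kernel-verified Lean document; each statement's English description precedes it below -/
import Mathlib

section
/- Let Q̂¹, Q̂² : A¹ × A² → ℝ be arbitrary payoff matrices and let π̂¹ ∈ Δ(A¹), π̂² ∈ Δ(A²) be arbitrary mixed strategies. Define v̂¹ = max_{a¹ ∈ A¹} E_{a² ∼ π̂²}[Q̂¹(a¹, a²)], v̂² = max_{a² ∈ A²} E_{a¹ ∼ π̂¹}[Q̂²(a¹, a²)], v̄ = v̂¹ + v̂², and Q̄ = Q̂¹ + Q̂². Then for each i = 1,2: 0 ≤ v̂ⁱ − valⁱ(Q̂ⁱ) ≤ v̄ − min_{a ∈ A¹ × A²} Q̄(a). -/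
open Filter Topology Finset

noncomputable section

def simplex (A : Type) [Fintype A] : Set (A → ℝ) :=
  {μ | (∀ a, 0 ≤ μ a) ∧ ∑ a, μ a = 1}

def expPay {A B : Type} [Fintype A] [Fintype B]
    (μ : A → ℝ) (ν : B → ℝ) (Q : A → B → ℝ) : ℝ :=
  ∑ a, ∑ b, μ a * ν b * Q a b

def val1 {A B : Type} [Fintype A] [Fintype B] (Q : A → B → ℝ) : ℝ :=
  ⨆ μ : simplex A, ⨅ ν : simplex B, expPay (μ : A → ℝ) (ν : B → ℝ) Q

def val2 {A B : Type} [Fintype A] [Fintype B] (Q : A → B → ℝ) : ℝ :=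
  ⨆ ν : simplex B, ⨅ μ : simplex A, expPay (μ : A → ℝ) (ν : B → ℝ) Q

def vhat1 {A B : Type} [Fintype A] [Fintype B] [Nonempty A]
    (Q : A → B → ℝ) (ν : B → ℝ) : ℝ :=
  Finset.univ.sup' Finset.univ_nonempty (fun a => ∑ b, ν b * Q a b)

def vhat2 {A B : Type} [Fintype A] [Fintype B] [Nonempty B]
    (Q : A → B → ℝ) (μ : A → ℝ) : ℝ :=
  Finset.univ.sup' Finset.univ_nonempty (fun b => ∑ a, μ a * Q a b)

def visits {S : Type} [DecidableEq S] (st : ℕ → S) (k : ℕ) (s : S) : ℕ :=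
  ((Finset.range k).filter (fun j => st j = s)).card

def shapley1 {S A B : Type} [Fintype S] [Fintype A] [Fintype B]
    (r : S → A → B → ℝ) (p : S → A → B → S → ℝ) (γ : ℝ)
    (Q : S → A → B → ℝ) : S → A → B → ℝ :=
  fun s a b => r s a b + γ * ∑ s', p s a b s' * val1 (Q s')

def shapley2 {S A B : Type} [Fintype S] [Fintype A] [Fintype B]
    (r : S → A → B → ℝ) (p : S → A → B → S → ℝ) (γ : ℝ)
    (Q : S → A → B → ℝ) : S → A → B → ℝ :=
  fun s a b => r s a b + γ * ∑ s', p s a b s' * val2 (Q s')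

-- auxiliary lemmas

lemma my_simplex_nonempty (A : Type) [Fintype A] [Nonempty A] :
    Nonempty (simplex A) := by
  classical
  obtain ⟨a0⟩ := ‹Nonempty A›
  refine ⟨⟨fun a => if a = a0 then 1 else 0, ?_, ?_⟩⟩
  · intro a; dsimp only; split <;> norm_num
  · simp

lemma my_sum_le_sup' {A : Type} [Fintype A] [Nonempty A] {μ : A → ℝ}
    (h : μ ∈ simplex A) (f : A → ℝ) :
    ∑ a, μ a * f a ≤ Finset.univ.sup' Finset.univ_nonempty f := by
  calc ∑ a, μ a * f a
      ≤ ∑ a, μ a * Finset.univ.sup' Finset.univ_nonempty f := by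
        apply Finset.sum_le_sum
        intro a _
        exact mul_le_mul_of_nonneg_left (Finset.le_sup' f (Finset.mem_univ a)) (h.1 a)
    _ = Finset.univ.sup' Finset.univ_nonempty f := by
        rw [← Finset.sum_mul, h.2, one_mul]

lemma my_inf'_le_sum {A : Type} [Fintype A] [Nonempty A] {μ : A → ℝ}
    (h : μ ∈ simplex A) (f : A → ℝ) :
    Finset.univ.inf' Finset.univ_nonempty f ≤ ∑ a, μ a * f a := by
  calc Finset.univ.inf' Finset.univ_nonempty f
      = ∑ a, μ a * Finset.univ.inf' Finset.univ_nonempty f := by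
        rw [← Finset.sum_mul, h.2, one_mul]
    _ ≤ ∑ a, μ a * f a := by
        apply Finset.sum_le_sum
        intro a _
        exact mul_le_mul_of_nonneg_left (Finset.inf'_le f (Finset.mem_univ a)) (h.1 a)

lemma my_expPay_eq1 {A B : Type} [Fintype A] [Fintype B]
    (μ : A → ℝ) (ν : B → ℝ) (Q : A → B → ℝ) :
    expPay μ ν Q = ∑ a, μ a * (∑ b, ν b * Q a b) := by
  unfold expPay
  congr 1; ext a
  rw [Finset.mul_sum]
  congr 1; ext b; ring

lemma my_expPay_eq2 {A B : Type} [Fintype A] [Fintype B]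
    (μ : A → ℝ) (ν : B → ℝ) (Q : A → B → ℝ) :
    expPay μ ν Q = ∑ b, ν b * (∑ a, μ a * Q a b) := by
  unfold expPay
  rw [Finset.sum_comm]
  congr 1; ext b
  rw [Finset.mul_sum]
  congr 1; ext a; ring

lemma my_expPay_add {A B : Type} [Fintype A] [Fintype B]
    (μ : A → ℝ) (ν : B → ℝ) (Q1 Q2 : A → B → ℝ) :
    expPay μ ν (fun a b => Q1 a b + Q2 a b) = expPay μ ν Q1 + expPay μ ν Q2 := by
  unfold expPay
  rw [← Finset.sum_add_distrib]
  congr 1; ext a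
  rw [← Finset.sum_add_distrib]
  congr 1; ext b; ring

lemma my_expPay_le_vhat1 {A B : Type} [Fintype A] [Fintype B] [Nonempty A]
    {μ : A → ℝ} (hμ : μ ∈ simplex A) (ν : B → ℝ) (Q : A → B → ℝ) :
    expPay μ ν Q ≤ vhat1 Q ν := by
  rw [my_expPay_eq1]
  exact my_sum_le_sup' hμ _

lemma my_expPay_le_vhat2 {A B : Type} [Fintype A] [Fintype B] [Nonempty B]
    (μ : A → ℝ) {ν : B → ℝ} (hν : ν ∈ simplex B) (Q : A → B → ℝ) :
    expPay μ ν Q ≤ vhat2 Q μ := by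
  rw [my_expPay_eq2]
  exact my_sum_le_sup' hν _

lemma my_inf_le_expPay {A B : Type} [Fintype A] [Fintype B] [Nonempty A] [Nonempty B]
    {μ : A → ℝ} (hμ : μ ∈ simplex A) {ν : B → ℝ} (hν : ν ∈ simplex B)
    (Q : A → B → ℝ) :
    Finset.univ.inf' Finset.univ_nonempty (fun p : A × B => Q p.1 p.2)
      ≤ expPay μ ν Q := by
  rw [my_expPay_eq1]
  set c := Finset.univ.inf' Finset.univ_nonempty (fun p : A × B => Q p.1 p.2) with hc
  have h1 : ∀ a : A, c ≤ ∑ b, ν b * Q a b := by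
    intro a
    refine le_trans ?_ (my_inf'_le_sum hν (fun b => Q a b))
    apply Finset.le_inf'
    intro b _
    exact Finset.inf'_le _ (Finset.mem_univ (a, b))
  calc c = ∑ a, μ a * c := by rw [← Finset.sum_mul, hμ.2, one_mul]
    _ ≤ ∑ a, μ a * (∑ b, ν b * Q a b) := by
        apply Finset.sum_le_sum; intro a _
        exact mul_le_mul_of_nonneg_left (h1 a) (hμ.1 a)

/-- Lemma 3 of the paper: tracking-error bound
0 ≤ v̂ⁱ − valⁱ(Q̂ⁱ) ≤ v̄ − min_a Q̄(a) for each i = 1,2. -/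
theorem tracking_error_bound
    {A1 A2 : Type} [Fintype A1] [Fintype A2] [Nonempty A1] [Nonempty A2]
    (Q1 Q2 : A1 → A2 → ℝ) (π1 : A1 → ℝ) (π2 : A2 → ℝ)
    (hπ1 : π1 ∈ simplex A1) (hπ2 : π2 ∈ simplex A2) :
    (0 ≤ vhat1 Q1 π2 - val1 Q1 ∧
      vhat1 Q1 π2 - val1 Q1 ≤
        (vhat1 Q1 π2 + vhat2 Q2 π1)
          - Finset.univ.inf' Finset.univ_nonempty
              (fun a : A1 × A2 => Q1 a.1 a.2 + Q2 a.1 a.2)) ∧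
    (0 ≤ vhat2 Q2 π1 - val2 Q2 ∧
      vhat2 Q2 π1 - val2 Q2 ≤
        (vhat1 Q1 π2 + vhat2 Q2 π1)
          - Finset.univ.inf' Finset.univ_nonempty
              (fun a : A1 × A2 => Q1 a.1 a.2 + Q2 a.1 a.2)) := by
  classical
  have hne1 : Nonempty (simplex A1) := my_simplex_nonempty A1
  have hne2 : Nonempty (simplex A2) := my_simplex_nonempty A2
  set c := Finset.univ.inf' Finset.univ_nonempty
      (fun a : A1 × A2 => Q1 a.1 a.2 + Q2 a.1 a.2) with hc
  -- bounds for Q1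
  have hbdd1 : ∀ μ : simplex A1, BddBelow (Set.range
      (fun ν : simplex A2 => expPay (μ : A1 → ℝ) (ν : A2 → ℝ) Q1)) := by
    intro μ
    refine ⟨Finset.univ.inf' Finset.univ_nonempty (fun p : A1 × A2 => Q1 p.1 p.2), ?_⟩
    rintro x ⟨ν, rfl⟩
    exact my_inf_le_expPay μ.2 ν.2 Q1
  have hF1le : ∀ μ : simplex A1,
      (⨅ ν : simplex A2, expPay (μ : A1 → ℝ) (ν : A2 → ℝ) Q1) ≤ vhat1 Q1 π2 := by
    intro μ
    exact le_trans (ciInf_le (hbdd1 μ) ⟨π2, hπ2⟩) (my_expPay_le_vhat1 μ.2 π2 Q1)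
  have hval1_le : val1 Q1 ≤ vhat1 Q1 π2 := ciSup_le hF1le
  have hval1_ge : c - vhat2 Q2 π1 ≤ val1 Q1 := by
    refine le_ciSup_of_le ⟨vhat1 Q1 π2, ?_⟩ ⟨π1, hπ1⟩ ?_
    · rintro x ⟨μ, rfl⟩; exact hF1le μ
    · apply le_ciInf
      intro ν
      have hQbar := my_inf_le_expPay hπ1 ν.2 (fun a b => Q1 a b + Q2 a b)
      rw [my_expPay_add] at hQbar
      have h2 := my_expPay_le_vhat2 π1 ν.2 Q2
      rw [hc]; linarith
  -- bounds for Q2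
  have hbdd2 : ∀ ν : simplex A2, BddBelow (Set.range
      (fun μ : simplex A1 => expPay (μ : A1 → ℝ) (ν : A2 → ℝ) Q2)) := by
    intro ν
    refine ⟨Finset.univ.inf' Finset.univ_nonempty (fun p : A1 × A2 => Q2 p.1 p.2), ?_⟩
    rintro x ⟨μ, rfl⟩
    exact my_inf_le_expPay μ.2 ν.2 Q2
  have hF2le : ∀ ν : simplex A2,
      (⨅ μ : simplex A1, expPay (μ : A1 → ℝ) (ν : A2 → ℝ) Q2) ≤ vhat2 Q2 π1 := by
    intro ν
    exact le_trans (ciInf_le (hbdd2 ν) ⟨π1, hπ1⟩) (my_expPay_le_vhat2 π1 ν.2 Q2)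
  have hval2_le : val2 Q2 ≤ vhat2 Q2 π1 := ciSup_le hF2le
  have hval2_ge : c - vhat1 Q1 π2 ≤ val2 Q2 := by
    refine le_ciSup_of_le ⟨vhat2 Q2 π1, ?_⟩ ⟨π2, hπ2⟩ ?_
    · rintro x ⟨ν, rfl⟩; exact hF2le ν
    · apply le_ciInf
      intro μ
      have hQbar := my_inf_le_expPay μ.2 hπ2 (fun a b => Q1 a b + Q2 a b)
      rw [my_expPay_add] at hQbar
      have h1 := my_expPay_le_vhat1 μ.2 π2 Q1
      rw [hc]; linarith
  refine ⟨⟨by linarith, by linarith⟩, ⟨by linarith, by linarith⟩⟩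
end
end

section
/- (Induction step in the one-sided asynchronous convergence argument.) Let N be a nonempty finite index set, γ ∈ (0,1), ε ∈ (0, (1−γ)/2), and M < 0. Let (y_k)_{k≥0} with y_k : N → ℝ, step sizes β_k : N → [0,1] with β_k(n) → 0 and Σ_{k=0}^∞ β_k(n) = ∞ for each n ∈ N, and ε_k : N → ℝ. Suppose that for every k ≥ 0 and n ∈ N: y_{k+1}(n) ≥ y_k(n) + β_k(n) (γ min_{m ∈ N} y_k(m) − y_k(n) + ε_k(n)), and that there exists k₀ such that for all k ≥ k₀ and all n ∈ N: y_k(n) ≥ M and ε_k(n) > εM. Then there exists K ≥ k₀ such that y_k(n) ≥ (γ + 2ε) M for all k ≥ K and all n ∈ N. -/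
open Filter Topology Finset

/-- induction step in the one-sided asynchronous convergence argument. -/
theorem one_sided_asynchronous_induction_step
    {N : Type} [Fintype N] [Nonempty N]
    (γ ε M : ℝ) (hγ : γ ∈ Set.Ioo (0:ℝ) 1) (hε : ε ∈ Set.Ioo (0:ℝ) ((1 - γ) / 2))
    (hM : M < 0)
    (y β εs : ℕ → N → ℝ)
    (hβmem : ∀ k n, β k n ∈ Set.Icc (0:ℝ) 1)
    (hβlim : ∀ n, Tendsto (fun k => β k n) atTop (𝓝 0))
    (hβsum : ∀ n, Tendsto (fun K => ∑ k ∈ Finset.range K, β k n) atTop atTop)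
    (hrec : ∀ k n,
      y k n + β k n * (γ * Finset.univ.inf' Finset.univ_nonempty (y k) - y k n + εs k n)
        ≤ y (k+1) n)
    (k0 : ℕ) (h0 : ∀ k, k0 ≤ k → ∀ n, M ≤ y k n ∧ ε * M < εs k n) :
    ∃ K, k0 ≤ K ∧ ∀ k, K ≤ k → ∀ n, (γ + 2 * ε) * M ≤ y k n := by
  obtain ⟨hγ0, hγ1⟩ := hγ
  obtain ⟨hε0, hε1⟩ := hε
  have ha0 : (1 - γ - ε) * M < 0 := mul_neg_of_pos_of_neg (by linarith) hM
  -- key induction: y k n - (γ+ε)M ≥ (1-γ-ε)M * ∏ (1 - β)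
  have key : ∀ k, k0 ≤ k → ∀ n,
      (1 - γ - ε) * M * ∏ j ∈ Finset.Ico k0 k, (1 - β j n) ≤ y k n - (γ + ε) * M := by
    intro k hk
    induction k, hk using Nat.le_induction with
    | base =>
      intro n
      rw [Finset.Ico_self, Finset.prod_empty, mul_one]
      have := (h0 k0 le_rfl n).1
      linarith
    | succ k hk ih =>
      intro n
      have hβ := hβmem k n
      obtain ⟨hβ0, hβ1⟩ := hβ
      have hmin : M ≤ Finset.univ.inf' Finset.univ_nonempty (y k) :=
        Finset.le_inf' _ _ (fun m _ => (h0 k hk m).1)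
      have hεb := (h0 k hk n).2
      have hrec' := hrec k n
      have h2 : β k n * (γ * M + ε * M - y k n)
          ≤ β k n * (γ * Finset.univ.inf' Finset.univ_nonempty (y k) - y k n + εs k n) := by
        apply mul_le_mul_of_nonneg_left _ hβ0
        nlinarith
      have step : (1 - β k n) * (y k n - (γ + ε) * M) ≤ y (k+1) n - (γ + ε) * M := by
        nlinarith
      calc (1 - γ - ε) * M * ∏ j ∈ Finset.Ico k0 (k+1), (1 - β j n)
          = (1 - β k n) * ((1 - γ - ε) * M * ∏ j ∈ Finset.Ico k0 k, (1 - β j n)) := by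
            rw [Finset.prod_Ico_succ_top hk]; ring
        _ ≤ (1 - β k n) * (y k n - (γ + ε) * M) :=
            mul_le_mul_of_nonneg_left (ih n) (by linarith)
        _ ≤ y (k+1) n - (γ + ε) * M := step
  -- eventual bound per coordinate
  have hfin : ∀ n : N, ∀ᶠ k in atTop,
      ε * M ≤ (1 - γ - ε) * M * ∏ j ∈ Finset.Ico k0 k, (1 - β j n) := by
    intro n
    have hS : Tendsto (fun k => ∑ j ∈ Finset.Ico k0 k, β j n) atTop atTop := by
      apply Tendsto.congr' _ ((tendsto_atTop_add_const_right atTop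
        (-(∑ j ∈ Finset.range k0, β j n)) (hβsum n)))
      filter_upwards [eventually_ge_atTop k0] with k hk
      rw [Finset.sum_Ico_eq_sub _ hk]; ring
    have hexp : Tendsto (fun k => (1 - γ - ε) * M *
        Real.exp (-(∑ j ∈ Finset.Ico k0 k, β j n))) atTop (𝓝 0) := by
      have h1 : Tendsto (fun k => Real.exp (-(∑ j ∈ Finset.Ico k0 k, β j n))) atTop (𝓝 0) :=
        Real.tendsto_exp_atBot.comp (tendsto_neg_atTop_atBot.comp hS)
      simpa using h1.const_mul ((1 - γ - ε) * M)
    have hεM : ε * M < 0 := mul_neg_of_pos_of_neg hε0 hM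
    have hev := hexp.eventually (eventually_gt_nhds hεM)
    filter_upwards [hev] with k hk
    have hprodle : ∏ j ∈ Finset.Ico k0 k, (1 - β j n)
        ≤ Real.exp (-(∑ j ∈ Finset.Ico k0 k, β j n)) := by
      rw [← Finset.sum_neg_distrib, Real.exp_sum]
      apply Finset.prod_le_prod
      · intro j _; linarith [(hβmem j n).2]
      · intro j _
        have := Real.add_one_le_exp (-(β j n))
        linarith
    have := mul_le_mul_of_nonpos_left hprodle ha0.le
    linarith
  have hall : ∀ᶠ k in atTop, ∀ n : N,
      ε * M ≤ (1 - γ - ε) * M * ∏ j ∈ Finset.Ico k0 k, (1 - β j n) :=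
    eventually_all.mpr hfin
  obtain ⟨K, hK⟩ := eventually_atTop.mp hall
  refine ⟨max K k0, le_max_right _ _, fun k hk n => ?_⟩
  have h1 := hK k (le_trans (le_max_left _ _) hk) n
  have h2 := key k (le_trans (le_max_right _ _) hk) n
  linarith
end

section
/- Consider a two-player stochastic game and fix player i with stage payoff r = rⁱ, and let Q_* be the unique fixed point of the Shapley operator 𝓕ⁱ. Let (Q̂_k)_{k≥0} with Q̂_k : S × A → ℝ be a uniformly bounded sequence satisfying Q̂_{k+1}(s,a) = Q̂_k(s,a) + β̄_k(s) (r(s,a) + γ Σ_{s'} p(s'|s,a) v̂_k(s') − Q̂_k(s,a)) for all (s,a), where the value estimates v̂_k : S → ℝ satisfy v̂_k(s') ≥ valⁱ(Q̂_k(s',·)) for all k and s', and the step sizes satisfy β̄_k(s) ∈ [0,1], β̄_k(s) → 0, and Σ_{k=0}^∞ β̄_k(s) = ∞ for each s ∈ S. If γ ∈ (0,1), then liminf_{k→∞} (Q̂_k(s,a) − Q_*(s,a)) ≥ 0 for every (s,a) ∈ S × A. -/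
open Filter Topology Finset

noncomputable section

/-!
Write `D_k = Q̂_k - Q_*` and `m_k = min D_k`. Since the minimax value is monotone and commutes with
adding constants, `v̂_k ≥ val(Q_*) + m_k`, and the update gives
`D_{k+1}(s,a) ≥ (1 - β̄_k(s)) D_k(s,a) + β̄_k(s) γ m_k`.
If `λ = liminf m_k`, then eventually `m_k > λ - ε`; a relaxation with `∑ β̄_k = ∞` forgets its
initial value, so every `D_k(s,a)`, hence `m_k`, ends up above `γ (λ - ε) - ε`.
Thus `λ ≥ γ λ`, i.e. `λ ≥ 0`.
-/

section Minimax

variable {A B : Type} [Fintype A] [Fintype B]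

instance simplex_nonempty [Nonempty A] : Nonempty (simplex A) := by
  refine ⟨⟨fun _ => (Fintype.card A : ℝ)⁻¹, fun _ => by positivity, ?_⟩⟩
  rw [sum_const, card_univ, nsmul_eq_mul, mul_inv_cancel₀ (by positivity)]

theorem le_sum_mul_of_mem_simplex {p f : A → ℝ} {c : ℝ} (hp : p ∈ simplex A)
    (h : ∀ a, c ≤ f a) : c ≤ ∑ a, p a * f a :=
  calc c = ∑ a, p a * c := by rw [← sum_mul, hp.2, one_mul]
    _ ≤ ∑ a, p a * f a := sum_le_sum fun a _ => mul_le_mul_of_nonneg_left (h a) (hp.1 a)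

variable {μ : A → ℝ} {ν : B → ℝ}

theorem expPay_mono (hμ : μ ∈ simplex A) (hν : ν ∈ simplex B) :
    Monotone (expPay μ ν) := fun _ _ h =>
  sum_le_sum fun a _ => sum_le_sum fun b _ =>
    mul_le_mul_of_nonneg_left (h a b) (mul_nonneg (hμ.1 a) (hν.1 b))

theorem expPay_add_const (hμ : μ ∈ simplex A) (hν : ν ∈ simplex B) (Y : A → B → ℝ) (c : ℝ) :
    expPay μ ν (fun a b => Y a b + c) = expPay μ ν Y + c := by
  simp only [expPay, mul_add, sum_add_distrib, ← sum_mul, ← mul_sum, hν.2, hμ.2, mul_one,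
    one_mul]

theorem expPay_const (hμ : μ ∈ simplex A) (hν : ν ∈ simplex B) (c : ℝ) :
    expPay μ ν (fun _ _ => c) = c := by
  simpa [expPay] using expPay_add_const hμ hν 0 c

theorem bddBelow_range_expPay (hμ : μ ∈ simplex A) (Y : A → B → ℝ) :
    BddBelow (Set.range fun ν : simplex B => expPay μ ν Y) := by
  obtain ⟨M, hM⟩ := (Set.finite_range (Function.uncurry Y)).bddBelow
  refine ⟨M, ?_⟩
  rintro _ ⟨ν, rfl⟩
  have hMY : (fun _ _ => M) ≤ Y := fun a b => (hM ⟨(a, b), rfl⟩ : M ≤ Y a b)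
  simpa only [expPay_const hμ ν.2] using expPay_mono hμ ν.2 hMY

theorem bddAbove_range_iInf_expPay [Nonempty B] (Y : A → B → ℝ) :
    BddAbove (Set.range fun μ : simplex A => ⨅ ν : simplex B, expPay μ ν Y) := by
  obtain ⟨M, hM⟩ := (Set.finite_range (Function.uncurry Y)).bddAbove
  obtain ⟨ν₀⟩ : Nonempty (simplex B) := inferInstance
  refine ⟨M, ?_⟩
  rintro _ ⟨μ, rfl⟩
  have hYM : Y ≤ fun _ _ => M := fun a b => (hM ⟨(a, b), rfl⟩ : Y a b ≤ M)
  refine (ciInf_le (bddBelow_range_expPay μ.2 Y) ν₀).trans ?_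
  simpa only [expPay_const μ.2 ν₀.2] using expPay_mono μ.2 ν₀.2 hYM

theorem val1_mono [Nonempty B] : Monotone (val1 : (A → B → ℝ) → ℝ) := fun _ X h =>
  ciSup_mono (bddAbove_range_iInf_expPay X) fun μ =>
    ciInf_mono (bddBelow_range_expPay μ.2 _) fun ν => expPay_mono μ.2 ν.2 h

theorem val1_add_const [Nonempty A] [Nonempty B] (Y : A → B → ℝ) (c : ℝ) :
    val1 (fun a b => Y a b + c) = val1 Y + c := by
  simp only [val1, ciSup_add (bddAbove_range_iInf_expPay Y),
    fun μ : simplex A => ciInf_add (bddBelow_range_expPay μ.2 Y) c]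
  exact iSup_congr fun μ => iInf_congr fun ν => expPay_add_const μ.2 ν.2 Y c

theorem val2_eq_val1_swap (Y : A → B → ℝ) : val2 Y = val1 (fun b a => Y a b) := by
  refine iSup_congr fun ν => iInf_congr fun μ => ?_
  simp only [expPay]
  rw [sum_comm]
  exact sum_congr rfl fun b _ => sum_congr rfl fun a _ => by ring

theorem val2_mono [Nonempty A] : Monotone (val2 : (A → B → ℝ) → ℝ) := fun Y X h => by
  simpa only [val2_eq_val1_swap] using val1_mono fun b a => h a b

theorem val2_add_const [Nonempty A] [Nonempty B] (Y : A → B → ℝ) (c : ℝ) :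
    val2 (fun a b => Y a b + c) = val2 Y + c := by
  simp only [val2_eq_val1_swap]
  exact val1_add_const _ c

end Minimax

theorem update_sub_fixedPoint_ge {S : Type} [Fintype S] {p v w : S → ℝ}
    {β γ m q q' qs r : ℝ} (hp : p ∈ simplex S) (hβ : 0 ≤ β) (hγ : 0 ≤ γ)
    (hq' : q' = q + β * (r + γ * ∑ s, p s * v s - q)) (hqs : qs = r + γ * ∑ s, p s * w s)
    (hvw : ∀ s, w s + m ≤ v s) :
    (1 - β) * (q - qs) + β * (γ * m) ≤ q' - qs := by
  have hm : m ≤ ∑ s, p s * v s - ∑ s, p s * w s := by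
    rw [← sum_sub_distrib]
    simp only [← mul_sub]
    exact le_sum_mul_of_mem_simplex hp fun s => by linarith [hvw s]
  subst hq' hqs
  nlinarith [mul_nonneg (mul_nonneg hβ hγ) (sub_nonneg.2 hm)]


theorem prod_one_sub_le_exp_neg_sum {ι : Type*} (s : Finset ι) {f : ι → ℝ}
    (hf : ∀ i ∈ s, f i ≤ 1) : ∏ i ∈ s, (1 - f i) ≤ Real.exp (-∑ i ∈ s, f i) := by
  rw [← sum_neg_distrib, Real.exp_sum]
  exact prod_le_prod (fun i hi => sub_nonneg.2 (hf i hi)) fun i _ => Real.one_sub_le_exp_neg _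

theorem tendsto_prod_Ico_one_sub_zero {β : ℕ → ℝ} (hβ : ∀ k, β k ≤ 1)
    (hsum : Tendsto (fun n => ∑ k ∈ range n, β k) atTop atTop) (K : ℕ) :
    Tendsto (fun n => ∏ k ∈ Ico K n, (1 - β k)) atTop (𝓝 0) := by
  have hexp : Tendsto (fun n => Real.exp (-(∑ k ∈ range n, β k - ∑ k ∈ range K, β k)))
      atTop (𝓝 0) :=
    Real.tendsto_exp_atBot.comp
      (tendsto_neg_atTop_atBot.comp (tendsto_atTop_add_const_right _ _ hsum))
  refine squeeze_zero' (Eventually.of_forall fun n => prod_nonneg fun k _ => by linarith [hβ k])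
    ?_ hexp
  filter_upwards [eventually_ge_atTop K] with n hn
  rw [← sum_Ico_eq_sub _ hn]
  exact prod_one_sub_le_exp_neg_sum _ fun k _ => hβ k

/-- Once `x_{k+1} ≥ (1 - β_k) x_k + β_k c`, the gap `x_n - c` is at least its negative part at
the start times `∏ (1 - β_k)`, which tends to `0` because `∏ (1 - β_k) ≤ exp (-∑ β_k)`. -/
theorem eventually_sub_le_of_relaxation {x β : ℕ → ℝ} {c : ℝ} (hβ : ∀ k, β k ≤ 1)
    (hsum : Tendsto (fun n => ∑ k ∈ range n, β k) atTop atTop)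
    (hrec : ∀ᶠ k in atTop, (1 - β k) * x k + β k * c ≤ x (k + 1)) :
    ∀ δ > 0, ∀ᶠ k in atTop, c - δ ≤ x k := by
  obtain ⟨K, hK⟩ := eventually_atTop.1 hrec
  have hgap : ∀ n, K ≤ n → (∏ k ∈ Ico K n, (1 - β k)) * min (x K - c) 0 ≤ x n - c := by
    refine Nat.le_induction (by simp) fun n hn ih => ?_
    rw [prod_Ico_succ_top hn]
    nlinarith [mul_le_mul_of_nonneg_left ih (sub_nonneg.2 (hβ n)), hK n hn]
  intro δ hδ
  have hlim := (tendsto_prod_Ico_one_sub_zero hβ hsum K).mul_const (min (x K - c) 0)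
  rw [zero_mul] at hlim
  filter_upwards [hlim.eventually (lt_mem_nhds (neg_lt_zero.2 hδ)), eventually_ge_atTop K]
    with n hn hKn
  linarith [hgap n hKn]

theorem zero_le_liminf_of_relaxation {ι : Type*} [Finite ι] [Nonempty ι] {D β : ℕ → ι → ℝ}
    {γ : ℝ} (hγ0 : 0 ≤ γ) (hγ1 : γ < 1) (hD : ∃ C, ∀ k i, |D k i| ≤ C)
    (hβ : ∀ k i, β k i ∈ Set.Icc (0 : ℝ) 1)
    (hsum : ∀ i, Tendsto (fun n => ∑ k ∈ range n, β k i) atTop atTop)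
    (hrec : ∀ k i, (1 - β k i) * D k i + β k i * (γ * ⨅ j, D k j) ≤ D (k + 1) i) (i : ι) :
    0 ≤ liminf (fun k => D k i) atTop := by
  obtain ⟨C, hC⟩ := hD
  have hmin_le : ∀ k j, ⨅ l, D k l ≤ D k j := fun k j =>
    ciInf_le (Set.finite_range _).bddBelow j
  have hbelow : IsBoundedUnder (· ≥ ·) atTop fun k => ⨅ j, D k j :=
    isBoundedUnder_of ⟨-C, fun k => le_ciInf fun j => (abs_le.1 (hC k j)).1⟩
  have habove : IsBoundedUnder (· ≤ ·) atTop fun k => ⨅ j, D k j :=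
    isBoundedUnder_of ⟨C, fun k => (hmin_le k i).trans (abs_le.1 (hC k i)).2⟩
  set lam := liminf (fun k => ⨅ j, D k j) atTop
  have hlam : ∀ ε > 0, γ * (lam - ε) - ε ≤ lam := by
    intro ε hε
    have hev : ∀ᶠ k in atTop, lam - ε < ⨅ j, D k j :=
      eventually_lt_of_lt_liminf (by linarith) hbelow
    have hall : ∀ j, ∀ᶠ k in atTop, γ * (lam - ε) - ε ≤ D k j := fun j =>
      eventually_sub_le_of_relaxation (fun k => (hβ k j).2) (hsum j)
        (hev.mono fun k hk => (hrec k j).trans' (by gcongr; exact (hβ k j).1)) ε hε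
    exact le_liminf_of_le habove.isCoboundedUnder_ge
      ((eventually_all.2 hall).mono fun k hk => le_ciInf hk)
  have hlam0 : 0 ≤ lam := by
    have : γ * lam ≤ lam := le_of_forall_pos_le_add fun ε hε => by
      nlinarith [hlam (ε / 2) (half_pos hε)]
    nlinarith
  refine hlam0.trans (liminf_le_liminf (Eventually.of_forall fun k => hmin_le k i) hbelow ?_)
  exact (isBoundedUnder_of ⟨C, fun k => (abs_le.1 (hC k i)).2⟩).isCoboundedUnder_ge

theorem liminf_Q_above_fixed_point_general
    {S A1 A2 : Type} [Fintype S] [Fintype A1] [Fintype A2]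
    (valf : (A1 → A2 → ℝ) → ℝ) (hvalf : valf = val1 ∨ valf = val2)
    (r : S → A1 → A2 → ℝ)
    (p : S → A1 → A2 → S → ℝ) (hp : ∀ s a1 a2, p s a1 a2 ∈ simplex S)
    (γ : ℝ) (hγ : γ ∈ Set.Ioo (0:ℝ) 1)
    (Qs : S → A1 → A2 → ℝ)
    (hfix : ∀ s a1 a2, Qs s a1 a2 = r s a1 a2 + γ * ∑ s', p s a1 a2 s' * valf (Qs s'))
    (Q : ℕ → S → A1 → A2 → ℝ)
    (hbdd : ∃ B : ℝ, ∀ k s a1 a2, |Q k s a1 a2| ≤ B)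
    (v : ℕ → S → ℝ) (hv : ∀ k s, valf (Q k s) ≤ v k s)
    (β : ℕ → S → ℝ) (hβmem : ∀ k s, β k s ∈ Set.Icc (0:ℝ) 1)
    (hβsum : ∀ s, Tendsto (fun K => ∑ k ∈ Finset.range K, β k s) atTop atTop)
    (hup : ∀ k s a1 a2, Q (k+1) s a1 a2 = Q k s a1 a2
        + β k s * (r s a1 a2 + γ * (∑ s', p s a1 a2 s' * v k s') - Q k s a1 a2)) :
    ∀ s a1 a2, 0 ≤ atTop.liminf (fun k => Q k s a1 a2 - Qs s a1 a2) := by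
  intro s a1 a2
  have : Nonempty S := ⟨s⟩
  have : Nonempty A1 := ⟨a1⟩
  have : Nonempty A2 := ⟨a2⟩
  have hval : Monotone valf ∧ ∀ Y c, valf (fun a b => Y a b + c) = valf Y + c := by
    rcases hvalf with rfl | rfl
    exacts [⟨val1_mono, val1_add_const⟩, ⟨val2_mono, val2_add_const⟩]
  let D : ℕ → S × A1 × A2 → ℝ := fun k q => Q k q.1 q.2.1 q.2.2 - Qs q.1 q.2.1 q.2.2
  have hD : ∃ C, ∀ k q, |D k q| ≤ C := by
    obtain ⟨B, hB⟩ := hbdd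
    obtain ⟨M, hM⟩ := (Set.finite_range fun q : S × A1 × A2 => |Qs q.1 q.2.1 q.2.2|).bddAbove
    exact ⟨B + M, fun k q => (abs_sub _ _).trans (add_le_add (hB _ _ _ _) (hM ⟨q, rfl⟩))⟩
  have hrec : ∀ k q, (1 - β k q.1) * D k q + β k q.1 * (γ * ⨅ q', D k q') ≤ D (k + 1) q := by
    rintro k ⟨s, a1, a2⟩
    have hvk : ∀ s', valf (Qs s') + ⨅ q', D k q' ≤ v k s' := fun s' => by
      rw [← hval.2]
      refine (hval.1 fun a b => ?_).trans (hv k s')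
      linarith [ciInf_le (Set.finite_range (D k)).bddBelow (s', a, b)]
    exact update_sub_fixedPoint_ge (hp s a1 a2) (hβmem k s).1 hγ.1.le (hup k s a1 a2)
      (hfix s a1 a2) hvk
  exact zero_le_liminf_of_relaxation hγ.1.le hγ.2 hD (fun k q => hβmem k q.1)
    (fun q => hβsum q.1) hrec (s, a1, a2)

/-- if the value estimates dominate the minimax values of the current
Q-estimates, then the Q-estimates are asymptotically bounded from below by the
fixed point of the player's Shapley operator. Here `valf` is the minimax value of
the fixed player i (either val¹ or val²). -/
theorem liminf_Q_above_fixed_point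
    {S A1 A2 : Type} [Fintype S] [Fintype A1] [Fintype A2]
    [Nonempty S] [Nonempty A1] [Nonempty A2]
    (valf : (A1 → A2 → ℝ) → ℝ) (hvalf : valf = val1 ∨ valf = val2)
    (r : S → A1 → A2 → ℝ)
    (p : S → A1 → A2 → S → ℝ) (hp : ∀ s a1 a2, p s a1 a2 ∈ simplex S)
    (γ : ℝ) (hγ : γ ∈ Set.Ioo (0:ℝ) 1)
    (Qs : S → A1 → A2 → ℝ)
    (hfix : ∀ s a1 a2, Qs s a1 a2 = r s a1 a2 + γ * ∑ s', p s a1 a2 s' * valf (Qs s'))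
    (Q : ℕ → S → A1 → A2 → ℝ)
    (hbdd : ∃ B : ℝ, ∀ k s a1 a2, |Q k s a1 a2| ≤ B)
    (v : ℕ → S → ℝ) (hv : ∀ k s, valf (Q k s) ≤ v k s)
    (β : ℕ → S → ℝ) (hβmem : ∀ k s, β k s ∈ Set.Icc (0:ℝ) 1)
    (hβlim : ∀ s, Tendsto (fun k => β k s) atTop (𝓝 0))
    (hβsum : ∀ s, Tendsto (fun K => ∑ k ∈ Finset.range K, β k s) atTop atTop)
    (hup : ∀ k s a1 a2, Q (k+1) s a1 a2 = Q k s a1 a2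
        + β k s * (r s a1 a2 + γ * (∑ s', p s a1 a2 s' * v k s') - Q k s a1 a2)) :
    ∀ s a1 a2, 0 ≤ atTop.liminf (fun k => Q k s a1 a2 - Qs s a1 a2) :=
  liminf_Q_above_fixed_point_general valf hvalf r p hp γ hγ Qs hfix Q hbdd v hv β hβmem hβsum hup
end
end
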